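/- arXiv:2308.00527 — 10 statements merged into one kernel-verified Lean document; each statement's English description precedes it below -/
import Mathlib

section
/- Let S be a nonempty subheap of a heap X. Then the following are equivalent: (a) there exists e in S such that for every x in X and s in S there exists t in S with [x,e,s] = [t,e,x]; (b) for every x in X and all e,s in S there exists t in S with [x,e,s] = [t,e,x]; (c) [[x,e,s],x,e] ∈ S for every x in X and all e,s in S. -/
/-- Equivalent characterizations of normality for a nonempty subheap `S` of a
heap `X`. -/
theorem normal_subheap_tfae {X : Type*} (p : X → X → X → X)
    (hm : ∀ x y : X, p x x y = y ∧ p x y y = x)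
    (ha : ∀ x y z w u : X, p (p x y z) w u = p x y (p z w u))
    (S : Set X) (hne : S.Nonempty)
    (hsub : ∀ x ∈ S, ∀ y ∈ S, ∀ z ∈ S, p x y z ∈ S) :
    ((∃ e ∈ S, ∀ x : X, ∀ s ∈ S, ∃ t ∈ S, p x e s = p t e x) ↔
        (∀ x : X, ∀ e ∈ S, ∀ s ∈ S, ∃ t ∈ S, p x e s = p t e x)) ∧
    ((∀ x : X, ∀ e ∈ S, ∀ s ∈ S, ∃ t ∈ S, p x e s = p t e x) ↔
        (∀ x : X, ∀ e ∈ S, ∀ s ∈ S, p (p x e s) x e ∈ S)) := by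
  have hl : ∀ x y : X, p x x y = y := fun x y => (hm x y).1
  have hr : ∀ x y : X, p x y y = x := fun x y => (hm x y).2
  constructor
  · constructor
    · rintro ⟨e₀, he₀, h⟩ x e he s hs
      have hs' : p e₀ e s ∈ S := hsub e₀ he₀ e he s hs
      obtain ⟨t', ht', heq⟩ := h x (p e₀ e s) hs'
      refine ⟨p t' e₀ e, hsub t' ht' e₀ he₀ e he, ?_⟩
      have h1 : p x e s = p x e₀ (p e₀ e s) := by
        rw [← ha, hr]
      rw [h1, heq, ha, hl]
    · rintro h
      obtain ⟨e, he⟩ := hne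
      exact ⟨e, he, fun x s hs => h x e he s hs⟩
  · constructor
    · intro h x e he s hs
      obtain ⟨t, ht, heq⟩ := h x e he s hs
      rw [heq, ha, hl, hr]
      exact ht
    · intro h x e he s hs
      refine ⟨p (p x e s) x e, h x e he s hs, ?_⟩
      rw [ha, hl, hr]
end

section
/- Let X be a heap and e a fixed element of X. Then there is an order isomorphism between the lattice of congruences on the heap X and the lattice of normal subheaps of X containing e: a congruence ~ corresponds to the class [e]_~, and a normal subheap S containing e corresponds to the congruence ~_S defined by x ~_S y iff there exists s ∈ S with [x,y,s] ∈ S. -/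
/-- A congruence on a heap `(X, p)`: an equivalence relation compatible with
the ternary operation. -/
structure HeapCongruence {X : Type*} (p : X → X → X → X) where
  r : X → X → Prop
  iseqv : Equivalence r
  compat : ∀ x x' y y' z z' : X, r x x' → r y y' → r z z' →
    r (p x y z) (p x' y' z')

/-- Normal subheaps of `(X, p)` containing a fixed element `e`. -/
def NormalSubheapContaining {X : Type*} (p : X → X → X → X) (e : X) :=
  {S : Set X // e ∈ S ∧ (∀ x ∈ S, ∀ y ∈ S, ∀ z ∈ S, p x y z ∈ S) ∧
    (∀ x : X, ∀ a ∈ S, ∀ s ∈ S, p (p x a s) x a ∈ S)}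

/-- For a heap `X` with fixed element `e`, there is an order isomorphism between
the congruences on `X` and the normal subheaps of `X` containing `e`: it sends a
congruence `C` to the class `[e]_C`, and its inverse sends a normal subheap `S`
to the relation `x ~_S y ↔ ∃ s ∈ S, p x y s ∈ S`. -/
theorem congruences_orderIso_normal_subheaps {X : Type*} (p : X → X → X → X)
    (hm : ∀ x y : X, p x x y = y ∧ p x y y = x)
    (ha : ∀ x y z w u : X, p (p x y z) w u = p x y (p z w u)) (e : X) :
    ∃ φ : HeapCongruence p ≃ NormalSubheapContaining p e,
      (∀ C D : HeapCongruence p,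
        (∀ x y : X, C.r x y → D.r x y) ↔ (φ C).1 ⊆ (φ D).1) ∧
      (∀ C : HeapCongruence p, (φ C).1 = {x : X | C.r x e}) ∧
      (∀ S : NormalSubheapContaining p e,
        (φ.symm S).r = fun x y => ∃ s ∈ S.1, p x y s ∈ S.1) := by
  letI : Group X :=
  { mul := fun a b => p a e b
    one := e
    inv := fun a => p e a e
    mul_assoc := fun a b c => ha a e b e c
    one_mul := fun a => (hm e a).1
    mul_one := fun a => (hm a e).2
    inv_mul_cancel := fun a => by
      show p (p e a e) e a = e
      rw [ha, (hm e a).1]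
      exact (hm e a).2 }
  have h1 : (1 : X) = e := rfl
  have hp : ∀ x y z : X, p x y z = x * y⁻¹ * z := by
    intro x y z
    show p x y z = p (p x e (p e y e)) e z
    rw [ha, ha, (hm e z).1, ← ha, (hm x e).2]
  -- closure facts for a normal subheap
  have hS : ∀ S : NormalSubheapContaining p e,
      ((1:X) ∈ S.1) ∧ (∀ a ∈ S.1, a⁻¹ ∈ S.1) ∧ (∀ a ∈ S.1, ∀ b ∈ S.1, a*b ∈ S.1) ∧
      (∀ g : X, ∀ a ∈ S.1, g*a*g⁻¹ ∈ S.1) := by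
    rintro ⟨S, heS, hcl, hnm⟩
    refine ⟨heS, fun a haS => hcl e heS a haS e heS, fun a haS b hbS => hcl a haS e heS b hbS,
      fun g a haS => ?_⟩
    have h := hnm g e heS a haS
    have heq : p (p g e a) g e = g * a * g⁻¹ := by
      simp only [hp, ← h1]; group
    rwa [heq] at h
  have memIff : ∀ S : NormalSubheapContaining p e, ∀ x y : X,
      (∃ s ∈ S.1, p x y s ∈ S.1) ↔ x * y⁻¹ ∈ S.1 := by
    intro S x y
    obtain ⟨hone, hinv, hmulc, _⟩ := hS S
    constructor
    · rintro ⟨s, hs, hxs⟩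
      rw [hp] at hxs
      have h := hmulc _ hxs _ (hinv s hs)
      rwa [show x * y⁻¹ * s * s⁻¹ = x * y⁻¹ by group] at h
    · intro h
      exact ⟨1, hone, by rw [hp]; simpa using h⟩
  have hext : ∀ C D : HeapCongruence p, C.r = D.r → C = D := by
    intro C D h
    cases C; cases D
    simp only at h
    subst h
    rfl
  refine ⟨⟨fun C => ⟨{x | C.r x e}, C.iseqv.refl e, ?_, ?_⟩,
      fun S => ⟨fun x y => ∃ s ∈ S.1, p x y s ∈ S.1, ?_, ?_⟩, ?_, ?_⟩, ?_,
      fun C => rfl, fun S => rfl⟩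
  · -- closure of {x | C.r x e}
    intro x hx y hy z hz
    have h := C.compat x e y e z e hx hy hz
    rwa [(hm e e).1] at h
  · -- normality of {x | C.r x e}
    intro x a haS s hsS
    have h := C.compat (p x a s) (p x e e) x x a e
      (C.compat x x a e s e (C.iseqv.refl x) haS hsS) (C.iseqv.refl x) haS
    rwa [(hm x e).2, (hm x e).1] at h
  · -- equivalence of the relation from S
    obtain ⟨hone, hinv, hmulc, _⟩ := hS S
    refine ⟨fun x => (memIff S x x).mpr ?_, fun {x y} h => (memIff S _ _).mpr ?_,
      fun {x y z} h h' => (memIff S _ _).mpr ?_⟩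
    · rw [mul_inv_cancel]; exact hone
    · have h2 := hinv _ ((memIff S x y).mp h)
      rwa [show (x * y⁻¹)⁻¹ = y * x⁻¹ by group] at h2
    · have h2 := hmulc _ ((memIff S x y).mp h) _ ((memIff S y z).mp h')
      rwa [show x * y⁻¹ * (y * z⁻¹) = x * z⁻¹ by group] at h2
  · -- compatibility of the relation from S
    obtain ⟨hone, hinv, hmulc, hconj⟩ := hS S
    intro x x' y y' z z' hx hy hz
    have hx' := (memIff S x x').mp hx
    have hy' := (memIff S y y').mp hy
    have hz' := (memIff S z z').mp hz
    refine (memIff S _ _).mpr ?_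
    rw [hp, hp]
    have hv : x * y⁻¹ * y' * x'⁻¹ ∈ S.1 := by
      have h0 := hconj y⁻¹ _ (hinv _ hy')
      have h := hmulc _ (hconj x _ h0) _ hx'
      rwa [show x * (y⁻¹ * (y * y'⁻¹)⁻¹ * y⁻¹⁻¹) * x⁻¹ * (x * x'⁻¹)
          = x * y⁻¹ * y' * x'⁻¹ by group] at h
    have h := hmulc _ (hconj (x * y⁻¹) _ hz') _ hv
    rwa [show x * y⁻¹ * (z * z'⁻¹) * (x * y⁻¹)⁻¹ * (x * y⁻¹ * y' * x'⁻¹)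
        = x * y⁻¹ * z * (x' * y'⁻¹ * z')⁻¹ by group] at h
  · -- left inverse
    intro C
    refine hext _ _ ?_
    funext x y
    apply propext
    constructor
    · rintro ⟨s, hs, hxs⟩
      have h := C.compat (p x y s) e s e y y hxs hs (C.iseqv.refl y)
      rwa [ha, (hm s y).1, (hm x y).2, (hm e y).1] at h
    · intro h
      refine ⟨e, C.iseqv.refl e, ?_⟩
      have h2 := C.compat x y y y e e h (C.iseqv.refl y) (C.iseqv.refl e)
      rwa [(hm y e).1] at h2
  · -- right inverse
    intro S
    apply Subtype.ext
    ext x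
    show (∃ s ∈ S.1, p x e s ∈ S.1) ↔ x ∈ S.1
    rw [memIff S x e, show x * e⁻¹ = x from by rw [← h1, inv_one, mul_one]]
  · -- order iso property
    intro C D
    constructor
    · intro h x hx
      exact h x e hx
    · intro h x y hxy
      have hmem : C.r (p x y e) e := by
        have h2 := C.compat x y y y e e hxy (C.iseqv.refl y) (C.iseqv.refl e)
        rwa [(hm y e).1] at h2
      have hD : D.r (p x y e) e := h hmem
      have h2 := D.compat (p x y e) e e e y y hD (D.iseqv.refl e) (D.iseqv.refl y)
      rwa [ha, (hm e y).1, (hm x y).2] at h2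
end

section
/- Let X be a heap, x a fixed element, ~ a congruence on X, and N := [x]_~ the corresponding normal subgroup of the group (X,b_x). Then for y,z ∈ X, y ~ z if and only if the cosets y·_x N and z·_x N in the group (X,b_x) coincide. -/
/-- Let `X` be a heap, `x` a fixed element, `r` a congruence on `X`, and
`N = [x]_r`.  Then `r y z` iff the cosets `y ·ₓ N` and `z ·ₓ N` in the group
`(X, bₓ)` coincide. -/
theorem congruence_iff_cosets_eq {X : Type*} (p : X → X → X → X)
    (hm : ∀ a b : X, p a a b = b ∧ p a b b = a)
    (ha : ∀ a b c d e : X, p (p a b c) d e = p a b (p c d e))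
    (r : X → X → Prop) (hequiv : Equivalence r)
    (hcompat : ∀ a a' b b' c c' : X, r a a' → r b b' → r c c' →
      r (p a b c) (p a' b' c'))
    (x : X) :
    ∀ y z : X, r y z ↔
      {b : X | ∃ n ∈ {a : X | r x a}, b = p y x n} =
        {b : X | ∃ n ∈ {a : X | r x a}, b = p z x n} := by
  obtain ⟨hrefl, hsymm, htrans⟩ := hequiv
  have key : ∀ y z : X, r y z →
      {b : X | ∃ n ∈ {a : X | r x a}, b = p y x n} ⊆
        {b : X | ∃ n ∈ {a : X | r x a}, b = p z x n} := by
    intro y z hyz b hb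
    obtain ⟨n, hn, rfl⟩ := hb
    refine ⟨p x z (p y x n), ?_, ?_⟩
    · -- r x (p x z (p y x n))
      have h1 : r (p x y (p y x n)) (p x z (p y x n)) :=
        hcompat _ _ _ _ _ _ (hrefl x) hyz (hrefl _)
      have h2 : p x y (p y x n) = n := by
        rw [← ha, (hm x y).2, (hm x n).1]
      rw [h2] at h1
      exact htrans hn h1
    · -- p y x n = p z x (p x z (p y x n))
      rw [← ha, ← ha, (hm z x).2, (hm z y).1]
  intro y z
  constructor
  · intro hyz
    exact Set.Subset.antisymm (key y z hyz) (key z y (hsymm hyz))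
  · intro hset
    have hy : y ∈ {b : X | ∃ n ∈ {a : X | r x a}, b = p y x n} :=
      ⟨x, hrefl x, ((hm y x).2).symm⟩
    rw [hset] at hy
    obtain ⟨n, hn, rfl⟩ := hy
    have : r (p z x x) (p z x n) :=
      hcompat _ _ _ _ _ _ (hrefl z) (hrefl x) hn
    rw [(hm z x).2] at this
    exact hsymm this
end

section
/- Let X be a nonempty heap, Y a subheap, ω a congruence on X. If Y ∩ [x]_ω is a singleton for every x ∈ X, then the map f : X → X sending x to the unique element of Y ∩ [x]_ω is an idempotent heap endomorphism of X with image Y and kernel ω; conversely, if f is any idempotent heap endomorphism with image Y and kernel ω, then Y ∩ [x]_ω = {f(x)} for every x. -/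
/-- Let `X` be a nonempty heap, `Y` a subheap, `ω` a congruence on `X`.
If `Y ∩ [x]_ω` is a singleton `{f x}` for every `x`, then `f` is an idempotent
heap endomorphism with image `Y` and kernel `ω`; conversely any idempotent heap
endomorphism with image `Y` and kernel `ω` satisfies `Y ∩ [x]_ω = {f x}`. -/
theorem idempotent_endo_of_transversal {X : Type*} [Nonempty X]
    (p : X → X → X → X)
    (hm : ∀ x y : X, p x x y = y ∧ p x y y = x)
    (ha : ∀ x y z w u : X, p (p x y z) w u = p x y (p z w u))
    (Y : Set X) (hY : ∀ x ∈ Y, ∀ y ∈ Y, ∀ z ∈ Y, p x y z ∈ Y)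
    (ω : X → X → Prop) (hequiv : Equivalence ω)
    (hcompat : ∀ x x' y y' z z' : X, ω x x' → ω y y' → ω z z' →
      ω (p x y z) (p x' y' z')) :
    (∀ f : X → X, (∀ x : X, Y ∩ {y : X | ω x y} = {f x}) →
      ((∀ x y z : X, f (p x y z) = p (f x) (f y) (f z)) ∧
        f ∘ f = f ∧ Set.range f = Y ∧ (∀ a b : X, f a = f b ↔ ω a b))) ∧
    (∀ f : X → X, (∀ x y z : X, f (p x y z) = p (f x) (f y) (f z)) →
      f ∘ f = f → Set.range f = Y → (∀ a b : X, f a = f b ↔ ω a b) →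
      ∀ x : X, Y ∩ {y : X | ω x y} = {f x}) := by
  constructor
  · intro f h
    have hmem : ∀ x : X, f x ∈ Y ∧ ω x (f x) := by
      intro x
      have : f x ∈ Y ∩ {y : X | ω x y} := by rw [h x]; rfl
      exact ⟨this.1, this.2⟩
    have huniq : ∀ x y : X, y ∈ Y → ω x y → y = f x := by
      intro x y hy hxy
      have : y ∈ Y ∩ {z : X | ω x z} := ⟨hy, hxy⟩
      rw [h x] at this
      exact this
    refine ⟨?_, ?_, ?_, ?_⟩
    · intro x y z
      refine (huniq (p x y z) (p (f x) (f y) (f z))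
        (hY _ (hmem x).1 _ (hmem y).1 _ (hmem z).1)
        (hcompat _ _ _ _ _ _ (hmem x).2 (hmem y).2 (hmem z).2)).symm
    · funext x
      exact (huniq (f x) (f x) (hmem x).1 (hequiv.refl _)).symm
    · ext y
      constructor
      · rintro ⟨x, rfl⟩; exact (hmem x).1
      · intro hy; exact ⟨y, (huniq y y hy (hequiv.refl _)).symm⟩
    · intro a b
      constructor
      · intro hab
        exact hequiv.trans (hmem a).2 (hab ▸ hequiv.symm (hmem b).2)
      · intro hab
        exact (huniq b (f a) (hmem a).1
          (hequiv.trans (hequiv.symm hab) (hmem a).2))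
  · intro f _ hidem hrange hker x
    have hid : ∀ z : X, f (f z) = f z := fun z => congrFun hidem z
    ext y
    constructor
    · rintro ⟨hy, hxy⟩
      obtain ⟨z, rfl⟩ := hrange.symm ▸ hy
      have : ω (f x) (f z) := hequiv.trans (hequiv.symm ((hker x (f x)).mp (hid x).symm)) hxy
      have := (hker (f x) (f z)).mpr this
      rw [hid, hid] at this
      exact this.symm
    · rintro rfl
      exact ⟨hrange ▸ ⟨x, rfl⟩, (hker x (f x)).mp (hid x).symm⟩
end

section
/- Let f be an idempotent heap endomorphism of a heap (X,[-,-,-]) with kernel ω, let e ∈ f(X) and K := f⁻¹(e). For y ∈ f(X), define α_y : K → K by α_y(k) = [y,e,[k,y,e]]. Then each α_y is a heap automorphism of K, α_e is the identity, and y ↦ α_y is a heap morphism from (f(X),[-,-,-]) to the heap of heap automorphisms of K with ternary operation [f,g,h] = f ∘ g⁻¹ ∘ h. -/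
/-- Let `f` be an idempotent heap endomorphism of a heap `X`, `e` a fixed point
of `f`, and `K = f⁻¹(e)`.  For fixed points `y` of `f` set `α y k = [y,e,[k,y,e]]`.
Then each `α y` maps `K` bijectively to itself and is a heap morphism on `K`,
`α e` is the identity on `K`, and `y ↦ α y` is a heap morphism into the heap of
heap automorphisms of `K` with operation `[f,g,h] = f ∘ g⁻¹ ∘ h`. -/
theorem action_on_kernel {X : Type*} (p : X → X → X → X)
    (hm : ∀ x y : X, p x x y = y ∧ p x y y = x)
    (ha : ∀ x y z w u : X, p (p x y z) w u = p x y (p z w u))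
    (f : X → X)
    (hf : ∀ x y z : X, f (p x y z) = p (f x) (f y) (f z))
    (hidem : ∀ x : X, f (f x) = f x)
    (e : X) (he : f e = e) :
    ∀ α : X → X → X, (∀ y k : X, α y k = p y e (p k y e)) →
      (∀ y : X, f y = y →
        Set.BijOn (α y) {k : X | f k = e} {k : X | f k = e} ∧
        (∀ k₁ k₂ k₃ : X, f k₁ = e → f k₂ = e → f k₃ = e →
          α y (p k₁ k₂ k₃) = p (α y k₁) (α y k₂) (α y k₃))) ∧
      (∀ k : X, f k = e → α e k = k) ∧
      (∀ y₁ y₂ y₃ : X, f y₁ = y₁ → f y₂ = y₂ → f y₃ = y₃ →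
        ∀ k k' : X, f k = e → f k' = e → α y₂ k' = α y₃ k →
          α (p y₁ y₂ y₃) k = α y₁ k') := by
  intro α hα
  letI : Group X :=
    { mul := fun x y => p x e y
      one := e
      inv := fun x => p e x e
      div := fun x y => p x e (p e y e)
      mul_assoc := fun a b c => ha a e b e c
      one_mul := fun a => (hm e a).1
      mul_one := fun a => (hm a e).2
      inv_mul_cancel := fun a => by
        show p (p e a e) e a = e
        rw [ha, (hm e a).1]
        exact (hm e a).2 }
  have hp : ∀ x y z : X, x * y⁻¹ * z = p x y z := fun x y z => by
    show p (p x e (p e y e)) e z = p x y z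
    rw [ha, ha, (hm e z).1, ← ha, (hm x e).2]
  have he1 : (1 : X) = e := rfl
  have hα' : ∀ y k : X, α y k = y * k * y⁻¹ := fun y k => by
    rw [hα, ← hp, ← hp, ← he1]; group
  have hfm : ∀ x y : X, f (x * y) = f x * f y := fun x y => by
    show f (p x e y) = p (f x) e (f y)
    rw [hf, he]
  have hfi : ∀ x : X, f x⁻¹ = (f x)⁻¹ := fun x => by
    show f (p e x e) = p e (f x) e
    rw [hf, he]
  refine ⟨fun y hy => ?_, fun k hk => ?_, fun y₁ y₂ y₃ hy₁ hy₂ hy₃ k k' hk hk' h23 => ?_⟩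
  · constructor
    · have hmt : ∀ z : X, f z = z → Set.MapsTo (fun k => z * k * z⁻¹)
          {k : X | f k = e} {k : X | f k = e} := fun z hz k hk => by
        simp only [Set.mem_setOf_eq] at hk ⊢
        rw [hfm, hfm, hfi, hz, hk, ← he1]
        group
      have h1 : Set.MapsTo (α y) {k : X | f k = e} {k : X | f k = e} := by
        intro k hk
        rw [hα']
        exact hmt y hy hk
      have h2 : Set.MapsTo (fun k => y⁻¹ * k * y⁻¹⁻¹)
          {k : X | f k = e} {k : X | f k = e} := by
        refine hmt y⁻¹ ?_
        rw [hfi, hy]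
      have hinv : Set.InvOn (fun k => y⁻¹ * k * y⁻¹⁻¹) (α y)
          {k : X | f k = e} {k : X | f k = e} := by
        constructor
        · intro k _; simp only [hα']; group
        · intro k _; simp only [hα']; group
      exact hinv.bijOn h1 h2
    · intro k₁ k₂ k₃ _ _ _
      rw [hα', hα', hα', hα', ← hp, ← hp]
      group
  · rw [hα', ← he1]; group
  · have hkk : k = y₃⁻¹ * (y₂ * k' * y₂⁻¹) * y₃ := by
      rw [← hα', h23, hα']; group
    rw [hα', hα', ← hp, hkk]
    group
end

section
/- Let K and Y be heaps, α : Y → Aut_Heap(K) a heap morphism (the automorphism group carrying the ternary operation [f,g,h] = f∘g⁻¹∘h), and y ∈ Y with α_y = id_K. Define on K × Y the ternary operation [(k₁,y₁),(k₂,y₂),(k₃,y₃)] := ([k₁, α_{[y₁,y₂,y]}(k₂), α_{[y₁,y₂,y]}(k₃)], [y₁,y₂,y₃]). Then K × Y with this operation is a heap. -/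
/-- Semidirect product of heaps: given heaps `K` and `Y`, a heap morphism
`α : Y → Aut_Heap(K)` (automorphisms carrying the heap operation
`[f,g,h] = f ∘ g⁻¹ ∘ h`) and `y ∈ Y` with `α y = id`, the ternary operation
`[(k₁,y₁),(k₂,y₂),(k₃,y₃)] = ([k₁, α [y₁,y₂,y] k₂, α [y₁,y₂,y] k₃], [y₁,y₂,y₃])`
makes `K × Y` a heap. -/
theorem semidirect_product_heap {K Y : Type*}
    (pK : K → K → K → K)
    (hmK : ∀ a b : K, pK a a b = b ∧ pK a b b = a)
    (haK : ∀ a b c d e : K, pK (pK a b c) d e = pK a b (pK c d e))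
    (pY : Y → Y → Y → Y)
    (hmY : ∀ a b : Y, pY a a b = b ∧ pY a b b = a)
    (haY : ∀ a b c d e : Y, pY (pY a b c) d e = pY a b (pY c d e))
    (α : Y → (K ≃ K))
    (hαmor : ∀ b : Y, ∀ a c d : K, (α b) (pK a c d) = pK (α b a) (α b c) (α b d))
    (hαheap : ∀ a b c : Y,
      ((α (pY a b c) : K → K) = (α a : K → K) ∘ ((α b).symm : K → K) ∘ (α c : K → K)))
    (y : Y) (hy : α y = Equiv.refl K) :
    ∀ q : K × Y → K × Y → K × Y → K × Y,
      (∀ k₁ k₂ k₃ : K, ∀ y₁ y₂ y₃ : Y,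
        q (k₁, y₁) (k₂, y₂) (k₃, y₃) =
          (pK k₁ (α (pY y₁ y₂ y) k₂) (α (pY y₁ y₂ y) k₃), pY y₁ y₂ y₃)) →
      ((∀ a b : K × Y, q a a b = b ∧ q a b b = a) ∧
        (∀ a b c d e : K × Y, q (q a b c) d e = q a b (q c d e))) := by
  intro q hq
  -- key cocycle identity
  have key : ∀ y₁ y₂ y₃ y₄ : Y, ∀ k : K,
      α (pY (pY y₁ y₂ y₃) y₄ y) k = α (pY y₁ y₂ y) (α (pY y₃ y₄ y) k) := by
    intro y₁ y₂ y₃ y₄ k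
    have h1 : pY (pY y₁ y₂ y₃) y₄ y = pY y₁ y₂ (pY y₃ y₄ y) := haY y₁ y₂ y₃ y₄ y
    have h2 := congrFun (hαheap y₁ y₂ (pY y₃ y₄ y)) k
    have h3 := congrFun (hαheap y₁ y₂ y) ((α (pY y₃ y₄ y)) k)
    simp only [Function.comp_apply, hy, Equiv.refl_apply] at h2 h3
    rw [h1, h2, ← h3]
  constructor
  · rintro ⟨k₁, y₁⟩ ⟨k₂, y₂⟩
    constructor
    · rw [hq, (hmY y₁ y).1, (hmY y₁ y₂).1, hy]
      simp [(hmK k₁ k₂).1]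
    · rw [hq, (hmY y₁ y₂).2, (hmK k₁ _).2]
  · rintro ⟨k₁, y₁⟩ ⟨k₂, y₂⟩ ⟨k₃, y₃⟩ ⟨k₄, y₄⟩ ⟨k₅, y₅⟩
    simp only [hq]
    refine Prod.ext ?_ (haY y₁ y₂ y₃ y₄ y₅)
    simp only
    rw [key, key, haK, hαmor]
end

section
/- With the semidirect product heap structure on K × Y determined by α and y (with α_y = id_K), the subset K × {y} is a normal subheap of K × Y, and for each fixed k ∈ K the map f : K × Y → K × Y, f(a,b) = (k,b), is an idempotent heap endomorphism. -/
/-- In the semidirect product heap `K × Y` determined by `α` and `y`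
(with `α y = id`), the subset `K × {y}` is a normal subheap, and for each fixed
`k ∈ K` the map `(a, b) ↦ (k, b)` is an idempotent heap endomorphism. -/
theorem semidirect_product_normal_and_idempotent {K Y : Type*}
    (pK : K → K → K → K)
    (hmK : ∀ a b : K, pK a a b = b ∧ pK a b b = a)
    (haK : ∀ a b c d e : K, pK (pK a b c) d e = pK a b (pK c d e))
    (pY : Y → Y → Y → Y)
    (hmY : ∀ a b : Y, pY a a b = b ∧ pY a b b = a)
    (haY : ∀ a b c d e : Y, pY (pY a b c) d e = pY a b (pY c d e))
    (α : Y → (K ≃ K))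
    (hαmor : ∀ b : Y, ∀ a c d : K, (α b) (pK a c d) = pK (α b a) (α b c) (α b d))
    (hαheap : ∀ a b c : Y,
      ((α (pY a b c) : K → K) = (α a : K → K) ∘ ((α b).symm : K → K) ∘ (α c : K → K)))
    (y : Y) (hy : α y = Equiv.refl K)
    (q : K × Y → K × Y → K × Y → K × Y)
    (hq : ∀ k₁ k₂ k₃ : K, ∀ y₁ y₂ y₃ : Y,
      q (k₁, y₁) (k₂, y₂) (k₃, y₃) =
        (pK k₁ (α (pY y₁ y₂ y) k₂) (α (pY y₁ y₂ y) k₃), pY y₁ y₂ y₃)) :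
    ((∀ a ∈ {s : K × Y | s.2 = y}, ∀ b ∈ {s : K × Y | s.2 = y},
        ∀ c ∈ {s : K × Y | s.2 = y}, q a b c ∈ {s : K × Y | s.2 = y}) ∧
      (∀ x : K × Y, ∀ e ∈ {s : K × Y | s.2 = y}, ∀ s ∈ {s : K × Y | s.2 = y},
        q (q x e s) x e ∈ {t : K × Y | t.2 = y})) ∧
    (∀ k : K, ∀ f : K × Y → K × Y, (∀ a : K, ∀ b : Y, f (a, b) = (k, b)) →
      ((∀ a b c : K × Y, f (q a b c) = q (f a) (f b) (f c)) ∧ f ∘ f = f)) := by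
  refine ⟨⟨?_, ?_⟩, ?_⟩
  · rintro ⟨a1, a2⟩ ha ⟨b1, b2⟩ hb ⟨c1, c2⟩ hc
    simp only [Set.mem_setOf_eq] at ha hb hc ⊢
    rw [ha, hb, hc, hq]
    simp [(hmY y y).2, (hmY y y).1]
  · rintro ⟨x1, x2⟩ ⟨e1, e2⟩ he ⟨s1, s2⟩ hs
    simp only [Set.mem_setOf_eq] at he hs ⊢
    rw [he, hs, hq]
    simp only
    rw [hq]
    simp [(hmY x2 y).2, (hmY x2 y).1]
  · intro k f hf
    constructor
    · rintro ⟨a1, a2⟩ ⟨b1, b2⟩ ⟨c1, c2⟩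
      rw [hq, hf, hf, hf, hf, hq]
      have : pK k (α (pY a2 b2 y) k) (α (pY a2 b2 y) k) = k := (hmK k _).2
      rw [this]
    · funext p
      obtain ⟨a, b⟩ := p
      simp [Function.comp, hf]
end

section
/- Let (B,*,∘) be a left skew brace. Define [x,y,z] := x * y⁻¹ * z (inverse taken in (B,*)). Then (B,[-,-,-],∘) is a left near-truss; in particular a ∘ [b,c,d] = [a∘b, a∘c, a∘d] for all a,b,c,d ∈ B. -/
/-- Let `(B, *, ∘)` be a left skew brace (so `(B, *)` and `(B, ∘)` are groups and
`a ∘ (b * c) = (a ∘ b) * a⁻¹ * (a ∘ c)`).  With `[x,y,z] := x * y⁻¹ * z`,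
the triple `(B, [-,-,-], ∘)` is a left near-truss: `[-,-,-]` is an associative
Mal'tsev operation and left distributivity
`a ∘ [b,c,d] = [a∘b, a∘c, a∘d]` holds. -/
theorem skew_brace_near_truss {B : Type*} [Group B] (circ : B → B → B)
    (hcassoc : ∀ a b c : B, circ (circ a b) c = circ a (circ b c))
    (e : B) (he₁ : ∀ a : B, circ e a = a) (he₂ : ∀ a : B, circ a e = a)
    (hinv : ∀ a : B, ∃ b : B, circ a b = e ∧ circ b a = e)
    (hbrace : ∀ a b c : B, circ a (b * c) = (circ a b) * a⁻¹ * (circ a c)) :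
    (∀ x y : B, x * x⁻¹ * y = y ∧ x * y⁻¹ * y = x) ∧
    (∀ x y z w u : B, (x * y⁻¹ * z) * w⁻¹ * u = x * y⁻¹ * (z * w⁻¹ * u)) ∧
    (∀ a b c d : B, circ a (b * c⁻¹ * d) = (circ a b) * (circ a c)⁻¹ * (circ a d)) := by
  have hone : ∀ a : B, circ a 1 = a := by
    intro a
    have h := hbrace a 1 1
    rw [one_mul] at h
    have h2 : circ a 1 * 1 = circ a 1 * (a⁻¹ * circ a 1) := by
      rw [mul_one, ← mul_assoc, ← h]
    have h3 := (mul_left_cancel h2).symm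
    rw [inv_mul_eq_iff_eq_mul, mul_one] at h3
    exact h3
  have hinv' : ∀ a c : B, circ a c⁻¹ = a * (circ a c)⁻¹ * a := by
    intro a c
    have h := hbrace a c c⁻¹
    rw [mul_inv_cancel, hone] at h
    have h2 : circ a c * a⁻¹ * circ a c⁻¹ = circ a c * a⁻¹ * (a * (circ a c)⁻¹ * a) := by
      rw [← h]; group
    have := mul_left_cancel (mul_left_cancel ((mul_assoc _ _ _).symm.trans (h2.trans (mul_assoc _ _ _))))
    exact this
  refine ⟨fun x y => ⟨by group, by group⟩, fun x y z w u => by group, fun a b c d => ?_⟩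
  rw [hbrace a (b * c⁻¹) d, hbrace a b c⁻¹, hinv' a c]
  group
end

section
/- Let (X,[-,-,-],·) be a left near-truss and y ∈ X a fixed element. For x ∈ X define λ_x^y : X → X by λ_x^y(z) = (x·y)⁻* *_y (x·z), where *_y is the group operation b_y and ⁻* its inversion. Then each λ_x^y is a group endomorphism of (X,b_y), and the map x ↦ λ_x^y is a semigroup morphism from (X,·) to the endomorphism monoid of the group (X,b_y); i.e., λ_{x·t}^y = λ_x^y ∘ λ_t^y. -/
/-- Let `(X, [-,-,-], ·)` be a left near-truss and `y ∈ X`.  Define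
`λ x z = (x·y)⁻* *_y (x·z)`, where `*_y` is the group operation `b_y a c = [a,y,c]`
and the inverse of `a` in `(X, b_y)` is `[y,a,y]`.  Then each `λ x` is a group
endomorphism of `(X, b_y)` and `x ↦ λ x` is a semigroup morphism `(X,·) →
End(X, b_y)`, i.e. `λ (x·t) = λ x ∘ λ t`. -/
theorem lambda_representation {X : Type*} (p : X → X → X → X)
    (hm : ∀ a b : X, p a a b = b ∧ p a b b = a)
    (ha : ∀ a b c d e : X, p (p a b c) d e = p a b (p c d e))
    (mul : X → X → X)
    (hmassoc : ∀ a b c : X, mul (mul a b) c = mul a (mul b c))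
    (hdist : ∀ a b c d : X, mul a (p b c d) = p (mul a b) (mul a c) (mul a d))
    (y : X) :
    ∀ lam : X → X → X,
      (∀ x z : X, lam x z = p (p y (mul x y) y) y (mul x z)) →
      ((∀ x a c : X, lam x (p a y c) = p (lam x a) y (lam x c)) ∧
        (∀ x t : X, lam (mul x t) = lam x ∘ lam t)) := by
  intro lam hlam
  have hm1 : ∀ a b : X, p a a b = b := fun a b => (hm a b).1
  have hm2 : ∀ a b : X, p a b b = a := fun a b => (hm a b).2
  have key : ∀ a b c : X, p a y (p y b c) = p a b c := by
    intro a b c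
    rw [← ha, hm2]
  have key2 : ∀ a b c d : X, p a b (p b c d) = p a c d := by
    intro a b c d
    rw [← ha, hm2]
  constructor
  · intro x a c
    simp only [hlam, ha, hm1, hdist, key, key2]
  · intro x t
    funext z
    simp only [Function.comp_apply, hlam, ha, hm1, hdist, key, key2, hmassoc]
end

section
/- Let (T,[-,-,-],·) be a truss and a ∈ T. Define D_a : T → T by D_a(x) = [a·x, x·a, x]. Then D_a is a derivation of T, i.e., D_a is a heap endomorphism and D_a(x·y) = [D_a(x)·y, x·y, x·D_a(y)] for all x,y ∈ T. -/
/-- Let `(T, [-,-,-], ·)` be a truss and `a ∈ T`.  Then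
`D_a x = [a·x, x·a, x]` is a derivation of `T`: it is a heap endomorphism and
`D_a (x·y) = [D_a x · y, x·y, x · D_a y]`. -/
theorem inner_derivation {T : Type*} (p : T → T → T → T)
    (hm : ∀ x y : T, p x x y = y ∧ p x y y = x)
    (ha : ∀ x y z w u : T, p (p x y z) w u = p x y (p z w u))
    (hcomm : ∀ x y z : T, p x y z = p z y x)
    (mul : T → T → T)
    (hmassoc : ∀ x y z : T, mul (mul x y) z = mul x (mul y z))
    (hldist : ∀ x y z w : T, mul x (p y z w) = p (mul x y) (mul x z) (mul x w))
    (hrdist : ∀ x y z w : T, mul (p y z w) x = p (mul y x) (mul z x) (mul w x))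
    (a : T) :
    ∀ D : T → T, (∀ x : T, D x = p (mul a x) (mul x a) x) →
      ((∀ x y z : T, D (p x y z) = p (D x) (D y) (D z)) ∧
        (∀ x y : T, D (mul x y) = p (mul (D x) y) (mul x y) (mul x (D y)))) := by
  intro D hD
  letI : Zero T := ⟨a⟩
  letI : Add T := ⟨fun x y => p x a y⟩
  letI : Neg T := ⟨fun x => p a x a⟩
  letI : AddCommGroup T :=
    { add := (· + ·)
      add_assoc := fun x y z => ha x a y a z
      zero := 0
      zero_add := fun x => (hm a x).1
      add_zero := fun x => (hm x a).2
      neg := (-·)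
      nsmul := nsmulRec
      zsmul := zsmulRec
      neg_add_cancel := fun x => by
        show p (p a x a) a x = a
        rw [ha, (hm a x).1]; exact (hm a x).2
      add_comm := fun x y => hcomm x a y }
  have key : ∀ x y z : T, p x y z = x - y + z := by
    intro x y z
    rw [sub_eq_add_neg]
    show p x y z = p (p x a (p a y a)) a z
    rw [← ha x a a y a, (hm x a).2, ha x y a a z, (hm a z).1]
  constructor
  · intro x y z
    rw [hD, hD, hD, hD, hldist, hrdist]
    simp only [key]
    abel
  · intro x y
    rw [hD, hD, hD, hrdist, hldist]
    simp only [hmassoc, key]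
    abel
end
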